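/- arXiv:1306.3418 — 2 statements merged into one kernel-verified Lean document; each statement's English description precedes it below -/
import Mathlib

section
/- Let ≾ be a total preorder on a finite set A with at least two equivalence classes, and let ψ be a predicate on A. For any u ∈ A, the following are equivalent: (i) some element v with v ∼ u satisfies ψ(v); (ii) either there exist y, x with psucc(u,y), psucc(x,y), and ψ(x), or there exist y, x with psucc(y,u), psucc(y,x), and ψ(x). -/
/-! Two elements covered by the same element (or covering the same element) of a total preorder
are equivalent, since otherwise one of them would lie strictly between the other and the common
cover. Conversely, finiteness provides every element with an upper or a lower cover unless its
class is the only one, and an element equivalent to `u` has the same covers as `u`. -/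

section TotalPreorder

variable {α : Type*} [Preorder α] [Std.Total (· ≤ · : α → α → Prop)] {u x y : α}

lemma le_of_not_gt_of_total (h : ¬ y < x) : x ≤ y :=
  (total_of (· ≤ ·) x y).elim id fun hyx => not_not.1 fun hxy => h (lt_of_le_not_ge hyx hxy)

lemma CovBy.antisymmRel_left (hu : u ⋖ y) (hx : x ⋖ y) : AntisymmRel (· ≤ ·) u x :=
  ⟨le_of_not_gt_of_total fun hxu => hx.2 hxu hu.lt,
    le_of_not_gt_of_total fun hux => hu.2 hux hx.lt⟩

lemma CovBy.antisymmRel_right (hu : y ⋖ u) (hx : y ⋖ x) : AntisymmRel (· ≤ ·) u x :=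
  ⟨le_of_not_gt_of_total fun hxu => hu.2 hx.lt hxu,
    le_of_not_gt_of_total fun hux => hx.2 hu.lt hux⟩

lemma antisymmRel_of_isMax_of_isMin (hmax : IsMax u) (hmin : IsMin u) (x : α) :
    AntisymmRel (· ≤ ·) u x := by
  rcases total_of (· ≤ ·) u x with h | h
  · exact ⟨h, hmax h⟩
  · exact ⟨hmin h, h⟩

lemma not_isMax_or_not_isMin (htwo : ∃ a b : α, ¬ AntisymmRel (· ≤ ·) a b) (u : α) :
    ¬ IsMax u ∨ ¬ IsMin u := by
  by_contra! h
  obtain ⟨a, b, hab⟩ := htwo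
  exact hab <| (antisymmRel_of_isMax_of_isMin h.1 h.2 a).symm.trans
    (antisymmRel_of_isMax_of_isMin h.1 h.2 b)

theorem exists_antisymmRel_iff_exists_covBy [Finite α]
    (htwo : ∃ a b : α, ¬ AntisymmRel (· ≤ ·) a b) (p : α → Prop) (u : α) :
    (∃ v, AntisymmRel (· ≤ ·) u v ∧ p v) ↔
      (∃ y x, u ⋖ y ∧ x ⋖ y ∧ p x) ∨ (∃ y x, y ⋖ u ∧ y ⋖ x ∧ p x) := by
  constructor
  · rintro ⟨v, huv, hv⟩
    rcases not_isMax_or_not_isMin htwo u with hmax | hmin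
    · obtain ⟨y, hy⟩ := exists_covBy_of_wellFoundedLT hmax
      exact .inl ⟨y, v, hy, huv.symm.trans_covBy hy, hv⟩
    · obtain ⟨y, hy⟩ := exists_covBy_of_wellFoundedGT hmin
      exact .inr ⟨y, v, hy, hy.trans_antisymmRel huv, hv⟩
  · rintro (⟨y, x, hu, hx, hp⟩ | ⟨y, x, hu, hx, hp⟩)
    · exact ⟨x, hu.antisymmRel_left hx, hp⟩
    · exact ⟨x, hu.antisymmRel_right hx, hp⟩

end TotalPreorder

theorem stmt_15_general {A : Type*} [Fintype A] (r : A → A → Prop)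
    (htrans : ∀ u v w, r u v → r v w → r u w)
    (htotal : ∀ u v, r u v ∨ r v u)
    -- at least two equivalence classes
    (htwo : ∃ a b : A, ¬ (r a b ∧ r b a))
    (ψ : A → Prop) :
    let sim : A → A → Prop := fun u v => r u v ∧ r v u
    let prec : A → A → Prop := fun u v => r u v ∧ ¬ r v u
    let psucc : A → A → Prop := fun u v => prec u v ∧ ¬ ∃ w, prec u w ∧ prec w v
    ∀ u : A, (∃ v, sim u v ∧ ψ v) ↔
      ((∃ y x, psucc u y ∧ psucc x y ∧ ψ x) ∨
       (∃ y x, psucc y u ∧ psucc y x ∧ ψ x)) := by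
  let _ : Preorder A :=
    { le := r, le_refl := fun a => (htotal a a).elim id id, le_trans := htrans }
  have : Std.Total (· ≤ · : A → A → Prop) := ⟨htotal⟩
  intro _ _ psucc u
  have hcov : ∀ a b, psucc a b ↔ a ⋖ b := fun a b => by
    simp only [psucc, CovBy, not_exists, not_and]; rfl
  simp only [hcov]
  exact exists_antisymmRel_iff_exists_covBy htwo ψ u

theorem stmt_15 {A : Type*} [Fintype A] (r : A → A → Prop)
    (hrefl : ∀ u, r u u)
    (htrans : ∀ u v w, r u v → r v w → r u w)
    (htotal : ∀ u v, r u v ∨ r v u)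
    -- at least two equivalence classes
    (htwo : ∃ a b : A, ¬ (r a b ∧ r b a))
    (ψ : A → Prop) :
    let sim : A → A → Prop := fun u v => r u v ∧ r v u
    let prec : A → A → Prop := fun u v => r u v ∧ ¬ r v u
    let psucc : A → A → Prop := fun u v => prec u v ∧ ¬ ∃ w, prec u w ∧ prec w v
    ∀ u : A, (∃ v, sim u v ∧ ψ v) ↔
      ((∃ y x, psucc u y ∧ psucc x y ∧ ψ x) ∨
       (∃ y x, psucc y u ∧ psucc y x ∧ ψ x)) :=
  stmt_15_general r htrans htotal htwo ψ
end

section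
/- Let A be a finite set with a strict linear order < and a total preorder ≾ whose equivalence classes are C_0 ≺ ⋯ ≺ C_n. Suppose every element not in C_n has an (lsucc,psucc)-successor and every element not in C_0 has an (lsucc,psucc)-predecessor, where an (lsucc,psucc)-successor of u is a v with lsucc(u,v) and psucc(u,v). Then for every 0 ≤ i < n, the map sending u ∈ C_i to its (lsucc,psucc)-successor is a bijection from C_i to C_{i+1}; in particular all classes C_0, …, C_n have the same cardinality. -/
/-!
Because `<` is trichotomous, an `lsucc`-successor and an `lsucc`-predecessor are unique
whenever they exist, so sending `u` to its (lsucc,psucc)-successor is injective, and the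
(lsucc,psucc)-predecessor of `w` is mapped onto `w`. A `psucc`-step always climbs exactly one
class, since every class is nonempty and any class strictly in between would break the
covering. Hence the map sends `C i` bijectively onto `C (i+1)`, and all classes have the
same cardinality.
-/

open Set

section

variable {α : Type*}

def CovByRel (lt : α → α → Prop) (u v : α) : Prop :=
  lt u v ∧ ¬ ∃ w, lt u w ∧ lt w v

def strictPart (r : α → α → Prop) (u v : α) : Prop :=
  r u v ∧ ¬ r v u

namespace CovByRel

variable {lt : α → α → Prop}

theorem right_unique (htri : ∀ u v, lt u v ∨ u = v ∨ lt v u) {u v w : α}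
    (hv : CovByRel lt u v) (hw : CovByRel lt u w) : v = w := by
  rcases htri v w with h | h | h
  · exact (hw.2 ⟨v, hv.1, h⟩).elim
  · exact h
  · exact (hv.2 ⟨w, hw.1, h⟩).elim

theorem left_unique (htri : ∀ u v, lt u v ∨ u = v ∨ lt v u) {u v w : α}
    (hu : CovByRel lt u w) (hv : CovByRel lt v w) : u = v := by
  rcases htri u v with h | h | h
  · exact (hu.2 ⟨v, h, hv.1⟩).elim
  · exact h
  · exact (hv.2 ⟨u, h, hu.1⟩).elim

end CovByRel

theorem exists_bijOn_of_rel {R : α → α → Prop} {s t : Set α}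
    (hleft : ∀ u₁ u₂ v, R u₁ v → R u₂ v → u₁ = u₂)
    (hright : ∀ u v₁ v₂, R u v₁ → R u v₂ → v₁ = v₂)
    (hs : ∀ u ∈ s, ∃ v ∈ t, R u v) (ht : ∀ v ∈ t, ∃ u ∈ s, R u v) :
    ∃ f : α → α, BijOn f s t ∧ ∀ u ∈ s, R u (f u) := by
  classical
  choose g hgt hgR using hs
  let f : α → α := fun u => if hu : u ∈ s then g u hu else u
  have hfR : ∀ u (hu : u ∈ s), R u (f u) := fun u hu => by simpa [f, hu] using hgR u hu
  have hft : ∀ u (hu : u ∈ s), f u ∈ t := fun u hu => by simpa [f, hu] using hgt u hu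
  refine ⟨f, ⟨hft, fun u hu v hv huv => hleft u v _ (hfR u hu) (huv ▸ hfR v hv), ?_⟩, hfR⟩
  intro w hw
  obtain ⟨u, hu, huw⟩ := ht w hw
  exact ⟨u, hu, hright u _ _ (hfR u hu) huw⟩

theorem exists_castSucc_succ_of_covByRel {r : α → α → Prop} {n : ℕ}
    {C : Fin (n + 1) → Set α}
    (hrel : ∀ i, ∀ u ∈ C i, ∀ v ∈ C i, r u v) (hne : ∀ i, (C i).Nonempty)
    (hmono : ∀ i j, i < j → ∀ u ∈ C i, ∀ v ∈ C j, r u v ∧ ¬ r v u)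
    {i j : Fin (n + 1)} {u v : α} (hu : u ∈ C i) (hv : v ∈ C j)
    (h : CovByRel (strictPart r) u v) :
    ∃ k : Fin n, i = k.castSucc ∧ j = k.succ := by
  have hij : i < j := by
    by_contra! hji
    rcases hji.lt_or_eq with hlt | rfl
    · exact h.1.2 (hmono j i hlt v hv u hu).1
    · exact h.1.2 (hrel j v hv u hu)
  obtain ⟨k, rfl⟩ := Fin.exists_castSucc_eq.2 (Fin.ne_last_of_lt hij)
  refine ⟨k, rfl, le_antisymm ?_ (Fin.castSucc_lt_iff_succ_le.1 hij)⟩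
  by_contra! hlt
  obtain ⟨m, hm⟩ := hne k.succ
  exact h.2 ⟨m, hmono _ _ Fin.castSucc_lt_succ u hu m hm, hmono _ _ hlt m hm v hv⟩

theorem ncard_eq_of_forall_bijOn_castSucc_succ {n : ℕ} {C : Fin (n + 1) → Set α}
    (h : ∀ i : Fin n, ∃ f : α → α, BijOn f (C i.castSucc) (C i.succ)) (i j : Fin (n + 1)) :
    (C i).ncard = (C j).ncard := by
  have hzero : ∀ i, (C i).ncard = (C 0).ncard := Fin.induction rfl fun k ih => by
    obtain ⟨f, hf⟩ := h k
    rw [← hf.ncard_eq, ih]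
  rw [hzero i, hzero j]

end

theorem stmt_16_general {A : Type*}
    (lt : A → A → Prop) (r : A → A → Prop)
    (lttri : ∀ u v, lt u v ∨ u = v ∨ lt v u)
    (hrefl : ∀ u, r u u)
    (rtrans : ∀ u v w, r u v → r v w → r u w)
    (n : ℕ) (C : Fin (n + 1) → Set A)
    (hclass : ∀ i, ∃ u, C i = {v | r u v ∧ r v u})
    (hcover : ∀ u, ∃ i, u ∈ C i)
    (hmono : ∀ i j : Fin (n + 1), i < j →
      ∀ u ∈ C i, ∀ v ∈ C j, r u v ∧ ¬ r v u) :
    let lsucc : A → A → Prop := fun u v => lt u v ∧ ¬ ∃ w, lt u w ∧ lt w v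
    let prec : A → A → Prop := fun u v => r u v ∧ ¬ r v u
    let psucc : A → A → Prop := fun u v => prec u v ∧ ¬ ∃ w, prec u w ∧ prec w v
    (∀ u, u ∉ C (Fin.last n) → ∃ v, lsucc u v ∧ psucc u v) →
    (∀ u, u ∉ C 0 → ∃ v, lsucc v u ∧ psucc v u) →
    ((∀ i : Fin n, ∃ f : A → A,
        Set.BijOn f (C i.castSucc) (C i.succ) ∧
        ∀ u ∈ C i.castSucc, lsucc u (f u) ∧ psucc u (f u)) ∧
     (∀ i j : Fin (n + 1), (C i).ncard = (C j).ncard)) := by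
  intro lsucc prec psucc hsucc hpred
  have hrel : ∀ i, ∀ u ∈ C i, ∀ v ∈ C i, r u v := fun i u hu v hv => by
    obtain ⟨a, ha⟩ := hclass i
    rw [ha] at hu hv
    exact rtrans u a v hu.2 hv.1
  have hne : ∀ i, (C i).Nonempty := fun i => by
    obtain ⟨a, ha⟩ := hclass i
    exact ⟨a, ha ▸ ⟨hrefl a, hrefl a⟩⟩
  have step := @exists_castSucc_succ_of_covByRel _ r n C hrel hne hmono
  have hbij : ∀ i : Fin n, ∃ f : A → A, BijOn f (C i.castSucc) (C i.succ) ∧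
      ∀ u ∈ C i.castSucc, lsucc u (f u) ∧ psucc u (f u) := fun i =>
    exists_bijOn_of_rel (R := fun u v => lsucc u v ∧ psucc u v)
      (fun _ _ _ h₁ h₂ => CovByRel.left_unique lttri h₁.1 h₂.1)
      (fun _ _ _ h₁ h₂ => CovByRel.right_unique lttri h₁.1 h₂.1)
      (fun u hu => by
        obtain ⟨v, hv⟩ := hsucc u fun hlast =>
          (hmono _ _ i.castSucc_lt_last u hu u hlast).2 (hrefl u)
        obtain ⟨j, hj⟩ := hcover v
        obtain ⟨k, hik, rfl⟩ := step hu hj hv.2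
        exact ⟨v, Fin.castSucc_inj.1 hik ▸ hj, hv⟩)
      (fun w hw => by
        obtain ⟨u, hu⟩ := hpred w fun hzero => (hmono _ _ i.succ_pos w hzero w hw).2 (hrefl w)
        obtain ⟨j, hj⟩ := hcover u
        obtain ⟨k, rfl, hik⟩ := step hj hw hu.2
        exact ⟨u, Fin.succ_inj.1 hik ▸ hj, hu⟩)
  exact ⟨hbij, ncard_eq_of_forall_bijOn_castSucc_succ fun i => (hbij i).imp fun _ => And.left⟩

theorem stmt_16 {A : Type*} [Fintype A]
    (lt : A → A → Prop) (r : A → A → Prop)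
    (hirr : ∀ u, ¬ lt u u)
    (lttrans : ∀ u v w, lt u v → lt v w → lt u w)
    (lttri : ∀ u v, lt u v ∨ u = v ∨ lt v u)
    (hrefl : ∀ u, r u u)
    (rtrans : ∀ u v w, r u v → r v w → r u w)
    (htotal : ∀ u v, r u v ∨ r v u)
    (n : ℕ) (C : Fin (n + 1) → Set A)
    (hclass : ∀ i, ∃ u, C i = {v | r u v ∧ r v u})
    (hcover : ∀ u, ∃ i, u ∈ C i)
    (hmono : ∀ i j : Fin (n + 1), i < j →
      ∀ u ∈ C i, ∀ v ∈ C j, r u v ∧ ¬ r v u) :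
    let lsucc : A → A → Prop := fun u v => lt u v ∧ ¬ ∃ w, lt u w ∧ lt w v
    let prec : A → A → Prop := fun u v => r u v ∧ ¬ r v u
    let psucc : A → A → Prop := fun u v => prec u v ∧ ¬ ∃ w, prec u w ∧ prec w v
    (∀ u, u ∉ C (Fin.last n) → ∃ v, lsucc u v ∧ psucc u v) →
    (∀ u, u ∉ C 0 → ∃ v, lsucc v u ∧ psucc v u) →
    ((∀ i : Fin n, ∃ f : A → A,
        Set.BijOn f (C i.castSucc) (C i.succ) ∧
        ∀ u ∈ C i.castSucc, lsucc u (f u) ∧ psucc u (f u)) ∧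
     (∀ i j : Fin (n + 1), (C i).ncard = (C j).ncard)) :=
  stmt_16_general lt r lttri hrefl rtrans n C hclass hcover hmono
end
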